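/- arXiv:2306.12383 — 10 statements merged into one kernel-verified Lean document; each statement's English description precedes it below -/
import Mathlib

section
/- Let A be a d×d real positive semidefinite matrix, let B ⊆ ℝ^d be a closed convex set, and define g(u, v) = (u − v)ᵀ A (u − v) for u, v ∈ ℝ^d. Let x̂ ∈ ℝ^d and let x* ∈ B be a minimizer of x ↦ g(x̂, x) over B, i.e. g(x̂, x*) ≤ g(x̂, x) for all x ∈ B. Then for every x₀ ∈ B, g(x*, x₀) ≤ g(x̂, x₀). -/
/-!
Write `w = x̂ - x*` and `z = x₀ - x*`, and let `Q v = vᵀ A v`. The points `x* + t z`, `0 < t ≤ 1`,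
lie in `B`, so minimality gives `Q w ≤ Q (w - t z) = Q w - t · polar Q w z + t² Q z`; letting
`t → 0⁺` yields the variational inequality `polar Q w z ≤ 0`. Then
`Q (x̂ - x₀) = Q (w - z) = Q w - polar Q w z + Q z ≥ Q w + Q (x* - x₀) ≥ Q (x* - x₀)`.
-/

open Matrix Filter Topology

theorem Matrix.toQuadraticForm'_apply {n R : Type*} [Fintype n] [DecidableEq n] [CommRing R]
    (A : Matrix n n R) (v : n → R) : A.toQuadraticForm' v = v ⬝ᵥ A *ᵥ v := by
  simp [Matrix.toQuadraticForm', Matrix.toLinearMap₂'_apply']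

theorem nonpos_of_forall_Ioc_le_mul {c M : ℝ} (h : ∀ t ∈ Set.Ioc (0 : ℝ) 1, c ≤ t * M) :
    c ≤ 0 := by
  have hlim : Tendsto (fun t : ℝ => t * M) (𝓝[>] 0) (𝓝 0) :=
    ((continuous_mul_const M).tendsto' 0 0 (zero_mul M)).mono_left nhdsWithin_le_nhds
  refine ge_of_tendsto hlim ?_
  filter_upwards [Ioc_mem_nhdsGT zero_lt_one] with t ht using h t ht

namespace QuadraticMap

variable {V : Type*} [AddCommGroup V] [Module ℝ V] (Q : QuadraticMap ℝ V ℝ)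

theorem map_sub_smul (w z : V) (t : ℝ) :
    Q (w - t • z) = Q w - t * polar Q w z + t ^ 2 * Q z := by
  have h : polar Q w (-(t • z)) = Q (w - t • z) - Q w - Q (-(t • z)) := by
    rw [polar, ← sub_eq_add_neg]
  rw [polar_neg_right, polar_smul_right, Q.map_neg, Q.map_smul, smul_eq_mul, smul_eq_mul] at h
  linear_combination -h

variable {Q} {B : Set V} {xhat xstar x₀ : V}

theorem polar_sub_nonpos_of_isMinOn (hB : Convex ℝ B)
    (hmin : IsMinOn (fun x => Q (xhat - x)) B xstar) (hxstar : xstar ∈ B) (hx₀ : x₀ ∈ B) :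
    polar Q (xhat - xstar) (x₀ - xstar) ≤ 0 := by
  refine nonpos_of_forall_Ioc_le_mul (M := Q (x₀ - xstar)) fun t ht => ?_
  have hle := isMinOn_iff.1 hmin _ (hB.add_smul_sub_mem hxstar hx₀ (Set.Ioc_subset_Icc_self ht))
  rw [show xhat - (xstar + t • (x₀ - xstar)) = xhat - xstar - t • (x₀ - xstar) by abel,
    map_sub_smul] at hle
  refine le_of_mul_le_mul_left ?_ ht.1
  linarith

theorem add_le_map_sub_of_isMinOn (hB : Convex ℝ B)
    (hmin : IsMinOn (fun x => Q (xhat - x)) B xstar) (hxstar : xstar ∈ B) (hx₀ : x₀ ∈ B) :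
    Q (xhat - xstar) + Q (xstar - x₀) ≤ Q (xhat - x₀) := by
  have h := Q.map_sub_smul (xhat - xstar) (x₀ - xstar) 1
  rw [one_smul, sub_sub_sub_cancel_right] at h
  have := polar_sub_nonpos_of_isMinOn hB hmin hxstar hx₀
  rw [Q.map_sub xstar]
  linarith

end QuadraticMap

theorem projection_lemma_mem_general {d : ℕ} (A : Matrix (Fin d) (Fin d) ℝ) (hA : A.PosSemidef)
    (B : Set (Fin d → ℝ)) (hBconvex : Convex ℝ B)
    (g : (Fin d → ℝ) → (Fin d → ℝ) → ℝ)
    (hg : ∀ u v, g u v = (u - v) ⬝ᵥ A.mulVec (u - v))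
    (xhat : Fin d → ℝ) (xstar : Fin d → ℝ) (hxstar : xstar ∈ B)
    (hmin : ∀ x ∈ B, g xhat xstar ≤ g xhat x) :
    ∀ x₀ ∈ B, g xstar x₀ ≤ g xhat x₀ := by
  intro x₀ hx₀
  have hgQ : ∀ u v, g u v = A.toQuadraticForm' (u - v) := fun u v => by
    rw [hg, Matrix.toQuadraticForm'_apply]
  have hminQ : IsMinOn (fun x => A.toQuadraticForm' (xhat - x)) B xstar :=
    isMinOn_iff.2 fun x hx => by simpa only [hgQ] using hmin x hx
  have hpyth := QuadraticMap.add_le_map_sub_of_isMinOn hBconvex hminQ hxstar hx₀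
  have hnonneg : 0 ≤ A.toQuadraticForm' (xhat - xstar) := by
    simpa [Matrix.toQuadraticForm'_apply] using hA.dotProduct_mulVec_nonneg (xhat - xstar)
  rw [hgQ, hgQ]
  linarith

/-- projection lemma, first part. For a PSD matrix `A`, a closed convex
set `B`, `g u v = (u - v)ᵀ A (u - v)`, and `x*` a minimizer of `g x̂ ·` over `B`,
we have `g x* x₀ ≤ g x̂ x₀` for all `x₀ ∈ B`. -/
theorem projection_lemma_mem {d : ℕ} (A : Matrix (Fin d) (Fin d) ℝ) (hA : A.PosSemidef)
    (B : Set (Fin d → ℝ)) (hBclosed : IsClosed B) (hBconvex : Convex ℝ B)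
    (g : (Fin d → ℝ) → (Fin d → ℝ) → ℝ)
    (hg : ∀ u v, g u v = (u - v) ⬝ᵥ A.mulVec (u - v))
    (xhat : Fin d → ℝ) (xstar : Fin d → ℝ) (hxstar : xstar ∈ B)
    (hmin : ∀ x ∈ B, g xhat xstar ≤ g xhat x) :
    ∀ x₀ ∈ B, g xstar x₀ ≤ g xhat x₀ :=
  projection_lemma_mem_general A hA B hBconvex g hg xhat xstar hxstar hmin
end

section
/- Let A be a d×d real positive semidefinite matrix, let B ⊆ ℝ^d be a closed convex set, and define g(u, v) = (u − v)ᵀ A (u − v) for u, v ∈ ℝ^d. Let x̂ ∈ ℝ^d and let x* ∈ B be a minimizer of x ↦ g(x̂, x) over B, i.e. g(x̂, x*) ≤ g(x̂, x) for all x ∈ B. Then for every z₀ ∈ ℝ^d and every x ∈ B, g(x*, z₀) ≤ g(x̂, z₀) + g(z₀, x); in particular g(x*, z₀) ≤ g(x̂, z₀) + min_{x ∈ B} g(z₀, x). -/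
/-!
Write `⟪u, v⟫` for the symmetric form `uᵀ A v`. Moving from `x*` towards any `x ∈ B` along the
segment cannot decrease `g x̂ ·`; to first order this is the variational inequality
`⟪x̂ - x*, x - x*⟫ ≤ 0`. Expanding `g x̂ z₀` around `x*` then gives
`g x̂ z₀ + g z₀ x - g x* z₀ = g (x̂ - x*) (z₀ - x) - 2 ⟪x̂ - x*, x - x*⟫ ≥ 0`.
-/

open Filter Matrix Set Topology

theorem nonpos_of_forall_le_mul {c p : ℝ} (h : ∀ t ∈ Ioc (0 : ℝ) 1, c ≤ t * p) : c ≤ 0 := by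
  have hlim : Tendsto (fun t : ℝ => t * p) (𝓝[>] 0) (𝓝 0) := by
    simpa using ((continuous_mul_const p).tendsto 0).mono_left nhdsWithin_le_nhds
  exact ge_of_tendsto hlim (eventually_of_mem (Ioc_mem_nhdsGT one_pos) h)

variable {E : Type*} [AddCommGroup E] [Module ℝ E] {β : LinearMap.BilinForm ℝ E}

namespace LinearMap.BilinForm.IsSymm

theorem apply_add_self (hβ : β.IsSymm) (u v : E) :
    β (u + v) (u + v) = β u u + 2 * β u v + β v v := by
  simp only [map_add, LinearMap.add_apply, hβ.eq v u]
  ring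

theorem apply_sub_smul_self (hβ : β.IsSymm) (u v : E) (t : ℝ) :
    β (u - t • v) (u - t • v) = β u u - 2 * t * β u v + t ^ 2 * β v v := by
  rw [sub_eq_add_neg, ← neg_smul, hβ.apply_add_self]
  simp only [map_smul, smul_apply, smul_eq_mul]
  ring

theorem apply_sub_nonpos_of_isMinOn (hβ : β.IsSymm) {s : Set E}
    (hs : Convex ℝ s) {xhat xstar x : E} (hxstar : xstar ∈ s) (hx : x ∈ s)
    (hmin : IsMinOn (fun y => β (xhat - y) (xhat - y)) s xstar) :
    β (xhat - xstar) (x - xstar) ≤ 0 := by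
  have hmin_seg : ∀ t ∈ Ioc (0 : ℝ) 1, 2 * β (xhat - xstar) (x - xstar) ≤
      t * β (x - xstar) (x - xstar) := by
    rintro t ⟨ht0, ht1⟩
    have hmem : xstar + t • (x - xstar) ∈ s := hs.add_smul_sub_mem hxstar hx ⟨ht0.le, ht1⟩
    have hle := isMinOn_iff.mp hmin _ hmem
    simp only [sub_add_eq_sub_sub, hβ.apply_sub_smul_self] at hle
    nlinarith
  linarith [nonpos_of_forall_le_mul hmin_seg]

theorem apply_sub_self_le_of_isMinOn (hβ : β.IsSymm)
    (hpos : ∀ v, 0 ≤ β v v) {s : Set E} (hs : Convex ℝ s) {xhat xstar x : E}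
    (hxstar : xstar ∈ s) (hx : x ∈ s)
    (hmin : IsMinOn (fun y => β (xhat - y) (xhat - y)) s xstar) (z : E) :
    β (xstar - z) (xstar - z) ≤ β (xhat - z) (xhat - z) + β (z - x) (z - x) := by
  set a := xhat - xstar
  have hvi : β a (x - xstar) ≤ 0 := hβ.apply_sub_nonpos_of_isMinOn hs hxstar hx hmin
  have hnn : 0 ≤ β a a + 2 * β a (x - z) + β (x - z) (x - z) := by
    rw [← hβ.apply_add_self]
    exact hpos _
  have hxhat : β (xhat - z) (xhat - z) =
      β a a + 2 * β a (xstar - z) + β (xstar - z) (xstar - z) := by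
    rw [← hβ.apply_add_self, sub_add_sub_cancel]
  have hlin : β a (xstar - z) = β a (x - z) - β a (x - xstar) := by
    rw [← map_sub, sub_sub_sub_cancel_left]
  have hsymm_dist : β (z - x) (z - x) = β (x - z) (x - z) := by
    rw [← neg_sub x z, map_neg, map_neg, LinearMap.neg_apply, neg_neg]
  linarith

end LinearMap.BilinForm.IsSymm

theorem projection_lemma_general_general {d : ℕ} (A : Matrix (Fin d) (Fin d) ℝ) (hA : A.PosSemidef)
    (B : Set (Fin d → ℝ)) (hBconvex : Convex ℝ B)
    (g : (Fin d → ℝ) → (Fin d → ℝ) → ℝ)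
    (hg : ∀ u v, g u v = (u - v) ⬝ᵥ A.mulVec (u - v))
    (xhat : Fin d → ℝ) (xstar : Fin d → ℝ) (hxstar : xstar ∈ B)
    (hmin : ∀ x ∈ B, g xhat xstar ≤ g xhat x) :
    (∀ z₀ : Fin d → ℝ, ∀ x ∈ B, g xstar z₀ ≤ g xhat z₀ + g z₀ x) ∧
    (∀ z₀ : Fin d → ℝ, g xstar z₀ ≤ g xhat z₀ + sInf ((fun x => g z₀ x) '' B)) := by
  set β := A.toBilin'
  have hβ : β.IsSymm := isSymm_toBilin'_iff_isSymm.mpr (isHermitian_iff_isSymm.mp hA.isHermitian)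
  have hpos : ∀ v, 0 ≤ β v v := fun v => by
    simpa [β, toBilin'_apply'] using hA.dotProduct_mulVec_nonneg v
  have hgβ : ∀ u v, g u v = β (u - v) (u - v) := fun u v => by rw [hg, toBilin'_apply']
  have hminβ : IsMinOn (fun y => β (xhat - y) (xhat - y)) B xstar :=
    isMinOn_iff.mpr fun x hx => by simpa only [hgβ] using hmin x hx
  have three_point : ∀ z₀, ∀ x ∈ B, g xstar z₀ ≤ g xhat z₀ + g z₀ x := fun z₀ x hx => by
    simpa only [hgβ] using hβ.apply_sub_self_le_of_isMinOn hpos hBconvex hxstar hx hminβ z₀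
  refine ⟨three_point, fun z₀ => ?_⟩
  have hinf : g xstar z₀ - g xhat z₀ ≤ sInf ((fun x => g z₀ x) '' B) :=
    le_csInf (Set.Nonempty.image _ ⟨xstar, hxstar⟩) <|
      forall_mem_image.mpr fun x hx => sub_le_iff_le_add'.mpr (three_point z₀ x hx)
  linarith

/-- projection lemma, general part. For a PSD matrix `A`, a closed convex
set `B`, `g u v = (u - v)ᵀ A (u - v)`, and `x*` a minimizer of `g x̂ ·` over `B`,
for every `z₀ ∈ ℝ^d` and every `x ∈ B`, `g x* z₀ ≤ g x̂ z₀ + g z₀ x`; in particular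
`g x* z₀ ≤ g x̂ z₀ + inf_{x ∈ B} g z₀ x`. -/
theorem projection_lemma_general {d : ℕ} (A : Matrix (Fin d) (Fin d) ℝ) (hA : A.PosSemidef)
    (B : Set (Fin d → ℝ)) (hBclosed : IsClosed B) (hBconvex : Convex ℝ B)
    (g : (Fin d → ℝ) → (Fin d → ℝ) → ℝ)
    (hg : ∀ u v, g u v = (u - v) ⬝ᵥ A.mulVec (u - v))
    (xhat : Fin d → ℝ) (xstar : Fin d → ℝ) (hxstar : xstar ∈ B)
    (hmin : ∀ x ∈ B, g xhat xstar ≤ g xhat x) :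
    (∀ z₀ : Fin d → ℝ, ∀ x ∈ B, g xstar z₀ ≤ g xhat z₀ + g z₀ x) ∧
    (∀ z₀ : Fin d → ℝ, g xstar z₀ ≤ g xhat z₀ + sInf ((fun x => g z₀ x) '' B)) :=
  projection_lemma_general_general A hA B hBconvex g hg xhat xstar hxstar hmin
end

section
/- Let X be a real-valued integrable random variable with finite variance on a probability space, let m > 0 satisfy m > |E[X]|, and let Z = max(min(X, m), −m) be the truncation of X to [−m, m]. Then |E[Z] − E[X]| ≤ (1/4) · Var[X] / (m − |E[X]|). -/
open MeasureTheory ProbabilityTheory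

/-!
Truncation moves a point `x` by `d = (|x| - m)⁺`. When `d > 0`, `x` lies at distance at least
`d + (m - |c|)` from any `c` with `|c| < m`, and `(d + δ)² ≥ 4dδ` gives
`d ≤ (x - c)² / (4δ)` with `δ = m - |c|`. Integrating this with `c = E[X]` bounds the bias by
`Var[X] / (4δ)`.
-/

lemma abs_truncate_sub_le (x c m : ℝ) (hc : |c| < m) :
    |max (min x m) (-m) - x| ≤ (x - c) ^ 2 / (4 * (m - |c|)) := by
  have hδ : 0 < m - |c| := by linarith
  have hc₁ := neg_abs_le c
  have hc₂ := le_abs_self c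
  rcases le_total x (-m) with hlow | hlow
  · rw [max_eq_right (by grind), abs_of_nonneg (by linarith), le_div_iff₀ (by positivity)]
    nlinarith [sq_nonneg (x - c + 2 * (m - |c|))]
  rcases le_total x m with hhigh | hhigh
  · rw [min_eq_left hhigh, max_eq_left hlow, sub_self, abs_zero]
    positivity
  · rw [min_eq_right hhigh, max_eq_left (by linarith), abs_of_nonpos (by linarith),
      le_div_iff₀ (by positivity)]
    nlinarith [sq_nonneg (x - c - 2 * (m - |c|))]

lemma abs_integral_truncate_sub_integral_le {Ω : Type*} [MeasurableSpace Ω] {μ : Measure Ω}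
    [IsProbabilityMeasure μ] {X : Ω → ℝ} (hX : MemLp X 2 μ) {m : ℝ} (hm : |μ[X]| < m) :
    |∫ ω, max (min (X ω) m) (-m) ∂μ - μ[X]| ≤ variance X μ / (4 * (m - |μ[X]|)) := by
  have hXint : Integrable X μ := hX.integrable one_le_two
  have hTint : Integrable (fun ω ↦ max (min (X ω) m) (-m)) μ :=
    (hXint.inf (integrable_const m)).sup (integrable_const (-m))
  have hsq : Integrable (fun ω ↦ (X ω - μ[X]) ^ 2) μ :=
    (hX.sub (memLp_const μ[X])).integrable_sq
  calc |∫ ω, max (min (X ω) m) (-m) ∂μ - μ[X]|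
      = ‖∫ ω, (max (min (X ω) m) (-m) - X ω) ∂μ‖ := by rw [integral_sub hTint hXint]; rfl
    _ ≤ ∫ ω, |max (min (X ω) m) (-m) - X ω| ∂μ := norm_integral_le_integral_norm _
    _ ≤ ∫ ω, (X ω - μ[X]) ^ 2 / (4 * (m - |μ[X]|)) ∂μ :=
      integral_mono (hTint.sub hXint).abs (hsq.div_const _)
        fun ω ↦ abs_truncate_sub_le (X ω) μ[X] m hm
    _ = variance X μ / (4 * (m - |μ[X]|)) := by
      rw [integral_div, variance_eq_integral hX.aemeasurable]

theorem truncation_bias_general {Ω : Type*} [MeasureSpace Ω] [IsProbabilityMeasure (ℙ : Measure Ω)]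
    (X : Ω → ℝ) (hX2 : MemLp X 2 ℙ)
    (m : ℝ) (hmE : |∫ ω, X ω| < m)
    (Z : Ω → ℝ) (hZ : ∀ ω, Z ω = max (min (X ω) m) (-m)) :
    |(∫ ω, Z ω) - ∫ ω, X ω| ≤ (1 / 4) * variance X ℙ / (m - |∫ ω, X ω|) := by
  have hbias := abs_integral_truncate_sub_integral_le hX2 hmE
  rw [← funext hZ] at hbias
  calc |(∫ ω, Z ω) - ∫ ω, X ω| ≤ variance X ℙ / (4 * (m - |∫ ω, X ω|)) := hbias
    _ = (1 / 4) * variance X ℙ / (m - |∫ ω, X ω|) := by rw [one_div_mul_eq_div, div_div]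

/-- bias of the truncation. For an integrable real random variable `X` with
finite variance, `m > |E[X]|`, and `Z = max (min X m) (-m)` the truncation of `X` to
`[-m, m]`, one has `|E[Z] - E[X]| ≤ (1/4) · Var[X] / (m - |E[X]|)`. -/
theorem truncation_bias {Ω : Type*} [MeasureSpace Ω] [IsProbabilityMeasure (ℙ : Measure Ω)]
    (X : Ω → ℝ) (hXint : Integrable X) (hX2 : MemLp X 2 ℙ)
    (m : ℝ) (hm : 0 < m) (hmE : |∫ ω, X ω| < m)
    (Z : Ω → ℝ) (hZ : ∀ ω, Z ω = max (min (X ω) m) (-m)) :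
    |(∫ ω, Z ω) - ∫ ω, X ω| ≤ (1 / 4) * variance X ℙ / (m - |∫ ω, X ω|) :=
  truncation_bias_general X hX2 m hmE Z hZ
end

section
/- Let X₁, …, Xₙ be independent real-valued integrable random variables with finite variances on a probability space, and let m > 0 satisfy m > |E[Xₖ]| for every k. Let Zₖ = max(min(Xₖ, m), −m) be the truncation of Xₖ to [−m, m]. Then for every z > 0, P[|Σₖ Zₖ − Σₖ E[Xₖ]| ≥ z] ≤ 2 · exp( Σₖ Var[Xₖ] / (m(m − |E[Xₖ]|)) − z/m ). -/
/-!
Write `μₖ = E[Xₖ]`, `aₖ = |μₖ| / m` and `qₖ(t) = 1 + t + t² / (1 - aₖ)`. Elementary calculus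
gives `eˢ ≤ qₖ(s)` for `s ≤ 1 + aₖ`, and since truncation moves `Xₖ` towards the vertex of `qₖ`,
`exp ((Zₖ - μₖ) / m) ≤ qₖ((Xₖ - μₖ) / m)` pointwise. Taking expectations,
`E[exp ((Zₖ - μₖ) / m)] ≤ 1 + Var[Xₖ] / (m (m - |μₖ|)) ≤ exp (Var[Xₖ] / (m (m - |μₖ|)))`,
and the Chernoff bound at `t = 1 / m` together with independence bounds the upper tail.
Truncation commutes with negation, so the same argument for `-Xₖ` bounds the lower tail.
-/

open MeasureTheory ProbabilityTheory Real

lemma exp_le_one_add_add_sq {s : ℝ} (hs : s ≤ 1) : exp s ≤ 1 + s + s ^ 2 := by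
  rcases le_or_gt (-1) s with h | h
  · linarith [(abs_le.1 (abs_exp_sub_one_sub_id_le (abs_le.2 ⟨h, hs⟩))).2]
  · nlinarith [exp_le_one_iff.2 (h.trans neg_one_lt_zero).le]

lemma exp_le_one_add_add_sq_div {a s : ℝ} (ha : 0 ≤ a) (ha1 : a < 1) (hs : s ≤ 1 + a) :
    exp s ≤ 1 + s + s ^ 2 / (1 - a) := by
  have h1a : 0 < 1 - a := by linarith
  rcases le_or_gt s 1 with hs1 | hs1
  · have : s ^ 2 ≤ s ^ 2 / (1 - a) := le_div_self (sq_nonneg s) h1a (by linarith)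
    linarith [exp_le_one_add_add_sq hs1]
  · -- `1 - a ≤ 2 - s`, `exp (s - 1) * (2 - s) ≤ 1` and `e < 3 < 2 + s`
    rw [← sub_le_iff_le_add', le_div_iff₀ h1a]
    calc (exp s - (1 + s)) * (1 - a) ≤ (exp s - (1 + s)) * (2 - s) :=
          mul_le_mul_of_nonneg_left (by linarith) (by linarith [add_one_le_exp s])
      _ = exp 1 * (exp (s - 1) * (2 - s)) - (1 + s) * (2 - s) := by
          rw [← mul_assoc, ← exp_add]; ring_nf
      _ ≤ exp 1 * (exp (s - 1) * exp (1 - s)) - (1 + s) * (2 - s) := by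
          gcongr; linarith [add_one_le_exp (1 - s)]
      _ ≤ s ^ 2 := by
          rw [← exp_add, sub_add_sub_cancel, sub_self, exp_zero, mul_one]
          nlinarith [exp_one_lt_d9]

lemma exp_max_min_one_sub_le {c : ℝ} (hc : |c| < 1) (x : ℝ) :
    exp (max (min x 1) (-1) - c) ≤ 1 + (x - c) + (x - c) ^ 2 / (1 - |c|) := by
  have hq : ∀ s ≤ 1 + |c|, exp s ≤ 1 + s + s ^ 2 / (1 - |c|) :=
    fun s => exp_le_one_add_add_sq_div (abs_nonneg c) hc
  have h1c : 0 < 1 - |c| := by linarith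
  have hc₁ := neg_abs_le c
  have hc₂ := le_abs_self c
  -- outside `[-1, 1]` the clipped value lies between `x` and the vertex `c - (1 - |c|) / 2`
  -- of the quadratic
  rcases le_total x (-1) with hx | hx
  · rw [min_eq_left (by linarith), max_eq_right hx]
    refine (hq _ (by linarith)).trans ?_
    have : -1 - c - (x - c) ≤ ((x - c) ^ 2 - (-1 - c) ^ 2) / (1 - |c|) := by
      rw [le_div_iff₀ h1c]; nlinarith
    rw [sub_div] at this
    linarith
  rcases le_total x 1 with hx' | hx'
  · rw [min_eq_left hx', max_eq_left hx]
    exact hq _ (by linarith)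
  · rw [min_eq_right hx', max_eq_left (by norm_num)]
    refine (hq _ (by linarith)).trans ?_
    have : 0 ≤ 1 - c := by linarith
    gcongr

lemma exp_max_min_sub_div_le {c m : ℝ} (hc : |c| < m) (x : ℝ) :
    exp ((max (min x m) (-m) - c) / m) ≤ 1 + (x - c) / m + (x - c) ^ 2 / (m * (m - |c|)) := by
  have hm : 0 < m := (abs_nonneg c).trans_lt hc
  have hcm : |c / m| < 1 := by rwa [abs_div, abs_of_pos hm, div_lt_one hm]
  have hclip : max (min x m) (-m) / m = max (min (x / m) 1) (-1) := by
    rw [← max_div_div_right hm.le, ← min_div_div_right hm.le, div_self hm.ne', neg_div,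
      div_self hm.ne']
  have hm' : m - |c| ≠ 0 := by linarith
  convert exp_max_min_one_sub_le hcm (x / m) using 2
  · rw [sub_div, hclip]
  · rw [sub_div]
  · rw [abs_div, abs_of_pos hm]
    field_simp

lemma max_min_neg {m : ℝ} (hm : 0 ≤ m) (x : ℝ) :
    max (min (-x) m) (-m) = -max (min x m) (-m) := by
  simp only [min_def, max_def]
  split_ifs <;> linarith

namespace ProbabilityTheory

variable {Ω ι : Type*} [MeasurableSpace Ω] {μ : Measure Ω} [IsProbabilityMeasure μ]

lemma iIndepFun.measureReal_sum_ge_le_of_mgf_le {Y : ι → Ω → ℝ} (h_indep : iIndepFun Y μ)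
    (h_meas : ∀ i, AEMeasurable (Y i) μ) {t : ℝ} (ht : 0 ≤ t)
    (h_int : ∀ i, Integrable (fun ω => exp (t * Y i ω)) μ) {v : ι → ℝ}
    (h_mgf : ∀ i, mgf (Y i) μ t ≤ exp (v i)) (s : Finset ι) (ε : ℝ) :
    μ.real {ω | ε ≤ ∑ i ∈ s, Y i ω} ≤ exp (∑ i ∈ s, v i - t * ε) := by
  have h_mgf_sum := h_indep.mgf_sum₀ h_meas s (t := t)
  -- `mgf` is `0` off integrability, while the product of the factors is positive
  have h_int_sum : Integrable (fun ω => exp (t * (∑ i ∈ s, Y i) ω)) μ :=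
    mgf_pos_iff.1 (h_mgf_sum ▸ Finset.prod_pos fun i _ => mgf_pos (h_int i))
  calc μ.real {ω | ε ≤ ∑ i ∈ s, Y i ω} = μ.real {ω | ε ≤ (∑ i ∈ s, Y i) ω} := by
        simp only [Finset.sum_apply]
    _ ≤ exp (-t * ε) * mgf (∑ i ∈ s, Y i) μ t := measure_ge_le_exp_mul_mgf ε ht h_int_sum
    _ ≤ exp (-t * ε) * ∏ i ∈ s, exp (v i) := by
        rw [h_mgf_sum]
        gcongr with i
        · exact fun i _ => mgf_nonneg
        · exact h_mgf i
    _ = exp (∑ i ∈ s, v i - t * ε) := by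
        rw [← exp_sum, ← exp_add]; ring_nf

lemma integrable_exp_mul_max_min_sub {X : Ω → ℝ} (hX : AEMeasurable X μ) (t m c : ℝ) :
    Integrable (fun ω => exp (t * (max (min (X ω) m) (-m) - c))) μ :=
  integrable_exp_mul_of_mem_Icc (a := -m - c) (b := |m| - c) (by fun_prop)
    (ae_of_all _ fun ω => ⟨by linarith [le_max_right (min (X ω) m) (-m)], by
      linarith [max_le_max (min_le_right (X ω) m) (le_refl (-m)), abs_eq_max_neg (a := m)]⟩)

lemma mgf_max_min_sub_integral_le {X : Ω → ℝ} (hX : MemLp X 2 μ) {m : ℝ}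
    (hm : |μ[X]| < m) :
    mgf (fun ω => max (min (X ω) m) (-m) - μ[X]) μ m⁻¹ ≤
      exp (variance X μ / (m * (m - |μ[X]|))) := by
  set c := μ[X] with hc
  set d := m * (m - |c|)
  have hX_meas : AEMeasurable X μ := hX.aestronglyMeasurable.aemeasurable
  have hX_int : Integrable X μ := hX.integrable one_le_two
  have h_lin : Integrable (fun ω => (X ω - c) / m) μ :=
    (hX_int.sub (integrable_const c)).div_const m
  have h_sq : Integrable (fun ω => (X ω - c) ^ 2 / d) μ :=
    (hX.sub (memLp_const c)).integrable_sq.div_const d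
  have h_aff : Integrable (fun ω => 1 + (X ω - c) / m) μ := (integrable_const 1).add h_lin
  calc mgf (fun ω => max (min (X ω) m) (-m) - c) μ m⁻¹
      = ∫ ω, exp (m⁻¹ * (max (min (X ω) m) (-m) - c)) ∂μ := rfl
    _ ≤ ∫ ω, (1 + (X ω - c) / m + (X ω - c) ^ 2 / d) ∂μ := by
        refine integral_mono (integrable_exp_mul_max_min_sub hX_meas m⁻¹ m c)
          (h_aff.add h_sq) fun ω => ?_
        rw [inv_mul_eq_div]
        exact exp_max_min_sub_div_le hm (X ω)
    _ = 1 + variance X μ / d := by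
        rw [integral_add h_aff h_sq,
          integral_add (integrable_const 1) h_lin, integral_div, integral_div,
          integral_sub hX_int (integrable_const c), variance_eq_integral hX_meas]
        simp [hc]
    _ ≤ exp (variance X μ / d) := by linarith [add_one_le_exp (variance X μ / d)]

lemma measureReal_sum_max_min_sub_integral_ge_le {X : ι → Ω → ℝ} (h_indep : iIndepFun X μ)
    (hX : ∀ i, MemLp (X i) 2 μ) {m : ℝ} (hm : 0 < m) (hmX : ∀ i, |μ[X i]| < m)
    (s : Finset ι) (ε : ℝ) :
    μ.real {ω | ε ≤ ∑ i ∈ s, (max (min (X i ω) m) (-m) - μ[X i])} ≤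
      exp (∑ i ∈ s, variance (X i) μ / (m * (m - |μ[X i]|)) - ε / m) := by
  have hX_meas : ∀ i, AEMeasurable (X i) μ := fun i => (hX i).aestronglyMeasurable.aemeasurable
  rw [div_eq_inv_mul ε]
  have h_indep_trunc : iIndepFun (fun i ω => max (min (X i ω) m) (-m) - μ[X i]) μ :=
    h_indep.comp (fun i x => max (min x m) (-m) - ∫ ω, X i ω ∂μ) fun _ => by fun_prop
  exact h_indep_trunc.measureReal_sum_ge_le_of_mgf_le (fun i => by fun_prop) (inv_nonneg.2 hm.le)
    (fun i => integrable_exp_mul_max_min_sub (hX_meas i) _ m _)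
    (fun i => mgf_max_min_sub_integral_le (hX i) (hmX i)) s ε

lemma measureReal_abs_sum_max_min_sub_integral_ge_le {X : ι → Ω → ℝ}
    (h_indep : iIndepFun X μ) (hX : ∀ i, MemLp (X i) 2 μ) {m : ℝ} (hm : 0 < m)
    (hmX : ∀ i, |μ[X i]| < m) (s : Finset ι) (ε : ℝ) :
    μ.real {ω | ε ≤ |∑ i ∈ s, (max (min (X i ω) m) (-m) - μ[X i])|} ≤
      2 * exp (∑ i ∈ s, variance (X i) μ / (m * (m - |μ[X i]|)) - ε / m) := by
  have upper := measureReal_sum_max_min_sub_integral_ge_le h_indep hX hm hmX s ε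
  have lower := measureReal_sum_max_min_sub_integral_ge_le (X := fun i ω => -X i ω)
    (h_indep.comp (fun _ x => -x) fun _ => measurable_neg) (fun i => (hX i).neg) hm
    (fun i => by simpa only [integral_neg, abs_neg] using hmX i) s ε
  have h_neg : ∀ ω, ∑ i ∈ s, (-max (min (X i ω) m) (-m) + μ[X i]) =
      -∑ i ∈ s, (max (min (X i ω) m) (-m) - μ[X i]) := fun ω => by
    simp only [← Finset.sum_neg_distrib, neg_sub', sub_neg_eq_add]
  simp only [integral_neg, abs_neg, variance_fun_neg, max_min_neg hm.le, sub_neg_eq_add,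
    h_neg] at lower
  calc μ.real {ω | ε ≤ |∑ i ∈ s, (max (min (X i ω) m) (-m) - μ[X i])|}
      ≤ μ.real ({ω | ε ≤ ∑ i ∈ s, (max (min (X i ω) m) (-m) - μ[X i])} ∪
          {ω | ε ≤ -∑ i ∈ s, (max (min (X i ω) m) (-m) - μ[X i])}) :=
        measureReal_mono fun ω hω => by
          rcases le_abs'.1 (show ε ≤ |_| from hω) with h | h
          · exact Or.inr (le_neg.2 h)
          · exact Or.inl h
    _ ≤ _ := (measureReal_union_le _ _).trans (by linarith)

end ProbabilityTheory

theorem truncation_concentration_general {Ω : Type*} [MeasureSpace Ω]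
    [IsProbabilityMeasure (ℙ : Measure Ω)] (n : ℕ) (X : Fin n → Ω → ℝ)
    (hXind : iIndepFun X ℙ)
    (hX2 : ∀ k, MemLp (X k) 2 ℙ)
    (m : ℝ) (hm : 0 < m) (hmE : ∀ k, |∫ ω, X k ω| < m)
    (Z : Fin n → Ω → ℝ) (hZ : ∀ k ω, Z k ω = max (min (X k ω) m) (-m))
    (z : ℝ) :
    ℙ {ω | z ≤ |(∑ k, Z k ω) - ∑ k, ∫ ω', X k ω'|} ≤
      ENNReal.ofReal
        (2 * exp ((∑ k, variance (X k) ℙ / (m * (m - |∫ ω, X k ω|))) - z / m)) := by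
  obtain rfl : Z = fun k ω => max (min (X k ω) m) (-m) := funext fun k => funext (hZ k)
  rw [← ofReal_measureReal]
  simp only [← Finset.sum_sub_distrib]
  exact ENNReal.ofReal_le_ofReal
    (measureReal_abs_sum_max_min_sub_integral_ge_le hXind hX2 hm hmE Finset.univ z)

/-- two-sided concentration for sums of truncated random variables.
For independent integrable real random variables `X 1, …, X n` with finite variances,
`m > |E[X k]|` for all `k`, and `Z k = max (min (X k) m) (-m)`, for every `z > 0`,
`P[|Σ Z k - Σ E[X k]| ≥ z] ≤ 2 exp(Σ Var[X k]/(m(m - |E[X k]|)) - z/m)`. -/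
theorem truncation_concentration {Ω : Type*} [MeasureSpace Ω]
    [IsProbabilityMeasure (ℙ : Measure Ω)] (n : ℕ) (X : Fin n → Ω → ℝ)
    (hXind : iIndepFun X ℙ)
    (hXint : ∀ k, Integrable (X k)) (hX2 : ∀ k, MemLp (X k) 2 ℙ)
    (m : ℝ) (hm : 0 < m) (hmE : ∀ k, |∫ ω, X k ω| < m)
    (Z : Fin n → Ω → ℝ) (hZ : ∀ k ω, Z k ω = max (min (X k ω) m) (-m))
    (z : ℝ) (hz : 0 < z) :
    ℙ {ω | z ≤ |(∑ k, Z k ω) - ∑ k, ∫ ω', X k ω'|} ≤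
      ENNReal.ofReal
        (2 * exp ((∑ k, variance (X k) ℙ / (m * (m - |∫ ω, X k ω|))) - z / m)) :=
  truncation_concentration_general n X hXind hX2 m hm hmE Z hZ z
end

section
/- Let X₁, …, Xₙ be independent real-valued integrable random variables with finite variances on a probability space, and let m > 0 satisfy m > |E[Xₖ]| for every k. Let Zₖ = max(min(Xₖ, m), −m) be the truncation of Xₖ to [−m, m]. Then for every z > 0, P[Σₖ Zₖ − Σₖ E[Xₖ] ≥ z] ≤ exp( Σₖ Var[Xₖ] / (m(m − |E[Xₖ]|)) − z/m ). -/
/-!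
Chernoff's bound at `t = 1 / m`. Writing `μ = E[X]`, `b = 1 - |μ| / m` and `y = (x - μ) / m`, every
real `x` satisfies `exp ((clamp m x - μ) / m) ≤ 1 + y + y ^ 2 / b`: on `[-m, m]` this is
`exp y ≤ 1 + y + y ^ 2 / b` for `y ≤ 2 - b`; above `m` the right side only grows; below `-m` the left
side is at most `exp (-b) ≤ 1 - b / 4`, the minimum of the right side. Taking expectations bounds the
moment generating function of `clamp m X - μ` at `1 / m` by `1 + Var[X] / (m (m - |μ|))`, hence by its
exponential, and independence multiplies these bounds.
-/

open MeasureTheory ProbabilityTheory Real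

theorem exp_le_one_add_add_sq_div_two_of_nonpos {y : ℝ} (hy : y ≤ 0) :
    exp y ≤ 1 + y + y ^ 2 / 2 := by
  have hneg : 1 - y + y ^ 2 / 2 ≤ exp (-y) := by
    simpa [sub_eq_add_neg] using quadratic_le_exp_of_nonneg (neg_nonneg.2 hy)
  have hprod : exp y * exp (-y) = 1 := by rw [← exp_add, add_neg_cancel, exp_zero]
  -- `(1 + y + y²/2) (1 - y + y²/2) = 1 + y⁴/4`
  nlinarith [exp_pos y, pow_nonneg (sq_nonneg y) 2]

theorem exp_le_one_add_add_sq_div_s5 {b y : ℝ} (hb₀ : 0 < b) (hb₂ : b ≤ 2) (hy : y ≤ 2 - b) :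
    exp y ≤ 1 + y + y ^ 2 / b := by
  rcases le_or_gt y 0 with hy₀ | hy₀
  · calc exp y ≤ 1 + y + y ^ 2 / 2 := exp_le_one_add_add_sq_div_two_of_nonpos hy₀
      _ ≤ 1 + y + y ^ 2 / b := by gcongr
  · calc exp y ≤ (2 + y) / (2 - y) := exp_le_two_add_div_two_sub hy₀.le (by linarith)
      _ = 1 + y + y ^ 2 / (2 - y) := by field_simp [(by linarith : (2 - y) ≠ 0)]; ring
      _ ≤ 1 + y + y ^ 2 / b := by gcongr; linarith

theorem one_sub_div_four_le_one_add_add_sq_div {b : ℝ} (hb : 0 < b) (y : ℝ) :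
    1 - b / 4 ≤ 1 + y + y ^ 2 / b := by
  have : 0 ≤ (y + b / 2) ^ 2 / b := by positivity
  have hsq : (y + b / 2) ^ 2 / b = y + y ^ 2 / b + b / 4 := by field_simp; ring
  linarith

def clamp (m x : ℝ) : ℝ := max (min x m) (-m)

theorem measurable_clamp (m : ℝ) : Measurable (clamp m) :=
  (measurable_id.min measurable_const).max measurable_const

theorem clamp_le {m : ℝ} (hm : 0 ≤ m) (x : ℝ) : clamp m x ≤ m :=
  max_le (min_le_right x m) (by linarith)

theorem exp_clamp_sub_div_le {m μ : ℝ} (hm : 0 < m) (hμ : |μ| < m) (x : ℝ) :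
    exp ((clamp m x - μ) / m) ≤
      1 + (x - μ) / m + (x - μ) ^ 2 / (m * (m - |μ|)) := by
  have hrhs : (x - μ) ^ 2 / (m * (m - |μ|)) = ((x - μ) / m) ^ 2 / ((m - |μ|) / m) := by
    field_simp
  rw [hrhs]
  set b := (m - |μ|) / m
  have hb₀ : 0 < b := div_pos (by linarith) hm
  have hb₁ : b ≤ 1 := (div_le_one hm).2 (by linarith [abs_nonneg μ])
  have hbelow : (-m - μ) / m ≤ -b := by
    rw [div_le_iff₀ hm, neg_mul, div_mul_cancel₀ _ hm.ne']; linarith [neg_abs_le μ]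
  have habove : (m - μ) / m ≤ 2 - b := by
    rw [div_le_iff₀ hm, sub_mul, div_mul_cancel₀ _ hm.ne']; linarith [neg_abs_le μ]
  rcases le_total x (-m) with hx | hx
  · have hclamp : clamp m x = -m := max_eq_right (min_le_of_left_le (by linarith))
    calc exp ((clamp m x - μ) / m) ≤ exp (-b) := by rwa [hclamp, exp_le_exp]
      _ ≤ 1 - b + b ^ 2 / 2 := by
          simpa [sub_eq_add_neg] using
            exp_le_one_add_add_sq_div_two_of_nonpos (neg_nonpos.2 hb₀.le)
      _ ≤ 1 - b / 4 := by nlinarith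
      _ ≤ _ := one_sub_div_four_le_one_add_add_sq_div hb₀ _
  rcases le_total x m with hx' | hx'
  · have hclamp : clamp m x = x := by simp [clamp, hx, hx']
    rw [hclamp]
    have hy : (x - μ) / m ≤ (m - μ) / m := div_le_div_of_nonneg_right (by linarith) hm.le
    exact exp_le_one_add_add_sq_div_s5 hb₀ (by linarith) (hy.trans habove)
  · have hclamp : clamp m x = m := by simp [clamp, hx', hm.le]
    have hw₀ : 0 ≤ (m - μ) / m := div_nonneg (by linarith [le_abs_self μ]) hm.le
    have hwy : (m - μ) / m ≤ (x - μ) / m := by gcongr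
    calc exp ((clamp m x - μ) / m) ≤ 1 + (m - μ) / m + ((m - μ) / m) ^ 2 / b := by
          rw [hclamp]; exact exp_le_one_add_add_sq_div_s5 hb₀ (by linarith) habove
      _ ≤ _ := by gcongr

theorem mgf_clamp_sub_le {Ω : Type*} [MeasurableSpace Ω] {P : Measure Ω} [IsProbabilityMeasure P]
    {X : Ω → ℝ} (hX : MemLp X 2 P) {m : ℝ} (hm : 0 < m) (hmE : |P[X]| < m) :
    mgf (fun ω ↦ clamp m (X ω) - P[X]) P m⁻¹ ≤ exp (variance X P / (m * (m - |P[X]|))) := by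
  set c := m * (m - |P[X]|)
  have hint_centered : Integrable (fun ω ↦ X ω - P[X]) P :=
    (hX.integrable one_le_two).sub (integrable_const _)
  have hint_lin : Integrable (fun ω ↦ 1 + (X ω - P[X]) / m) P :=
    (integrable_const 1).add (hint_centered.div_const m)
  have hint_sq : Integrable (fun ω ↦ (X ω - P[X]) ^ 2 / c) P :=
    (hX.sub (memLp_const _)).integrable_sq.div_const c
  have hintegral : ∫ ω, (1 + (X ω - P[X]) / m + (X ω - P[X]) ^ 2 / c) ∂P
      = 1 + variance X P / c := by
    rw [integral_add hint_lin hint_sq, integral_add (integrable_const 1)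
      (hint_centered.div_const m), integral_div, integral_div,
      integral_sub (hX.integrable one_le_two) (integrable_const _),
      ← variance_eq_integral hX.aemeasurable]
    simp
  calc mgf (fun ω ↦ clamp m (X ω) - P[X]) P m⁻¹
      ≤ ∫ ω, (1 + (X ω - P[X]) / m + (X ω - P[X]) ^ 2 / c) ∂P := by
        refine integral_mono_of_nonneg (ae_of_all _ fun _ ↦ (exp_pos _).le)
          (hint_lin.add hint_sq) (ae_of_all _ fun ω ↦ ?_)
        simpa only [inv_mul_eq_div] using exp_clamp_sub_div_le hm hmE (X ω)
    _ = 1 + variance X P / c := hintegral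
    _ ≤ exp (variance X P / c) := by linarith [add_one_le_exp (variance X P / c)]

theorem measure_sum_ge_le_exp_sum_sub {Ω ι : Type*} [MeasurableSpace Ω] {P : Measure Ω}
    [Fintype ι] {Y : ι → Ω → ℝ} (hind : iIndepFun Y P) (hmeas : ∀ i, AEMeasurable (Y i) P)
    {t : ℝ} (ht : 0 ≤ t) (hint : Integrable (fun ω ↦ exp (t * (∑ i, Y i) ω)) P)
    {c : ι → ℝ} (hc : ∀ i, mgf (Y i) P t ≤ exp (c i)) (ε : ℝ) :
    P.real {ω | ε ≤ (∑ i, Y i) ω} ≤ exp (∑ i, c i - t * ε) := by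
  have := hind.isProbabilityMeasure
  calc P.real {ω | ε ≤ (∑ i, Y i) ω} ≤ exp (-t * ε) * mgf (∑ i, Y i) P t :=
        measure_ge_le_exp_mul_mgf ε ht hint
    _ = exp (-t * ε) * ∏ i, mgf (Y i) P t := by rw [hind.mgf_sum₀ hmeas]
    _ ≤ exp (-t * ε) * ∏ i, exp (c i) := by
        gcongr with i
        · exact fun i _ ↦ mgf_nonneg
        · exact hc i
    _ = exp (∑ i, c i - t * ε) := by
        rw [← exp_sum, ← exp_add]; ring_nf

theorem truncation_concentration_one_sided_general {Ω : Type*} [MeasureSpace Ω]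
    [IsProbabilityMeasure (ℙ : Measure Ω)] (n : ℕ) (X : Fin n → Ω → ℝ)
    (hXind : iIndepFun X ℙ)
    (hX2 : ∀ k, MemLp (X k) 2 ℙ)
    (m : ℝ) (hm : 0 < m) (hmE : ∀ k, |∫ ω, X k ω| < m)
    (Z : Fin n → Ω → ℝ) (hZ : ∀ k ω, Z k ω = max (min (X k ω) m) (-m))
    (z : ℝ) :
    ℙ {ω | z ≤ (∑ k, Z k ω) - ∑ k, ∫ ω', X k ω'} ≤
      ENNReal.ofReal
        (exp ((∑ k, variance (X k) ℙ / (m * (m - |∫ ω, X k ω|))) - z / m)) := by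
  set W : Fin n → Ω → ℝ := fun k ω ↦ clamp m (X k ω) - ∫ ω', X k ω'
  have hW_ind : iIndepFun W ℙ :=
    hXind.comp (fun k x ↦ clamp m x - ∫ ω', X k ω') fun _ ↦ (measurable_clamp m).sub_const _
  have hW_meas : ∀ k, AEMeasurable (W k) ℙ := fun k ↦
    ((measurable_clamp m).comp_aemeasurable (hX2 k).aemeasurable).sub_const _
  have hW_le : ∀ ω, (∑ k, W k) ω ≤ ∑ k, (m + |∫ ω', X k ω'|) := fun ω ↦ by
    simp only [Finset.sum_apply]
    gcongr with k
    linarith [clamp_le hm.le (X k ω), neg_abs_le (∫ ω', X k ω')]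
  have hint := integrable_exp_mul_of_le _ _ (inv_nonneg.2 hm.le)
    (Finset.aemeasurable_sum _ fun k _ ↦ hW_meas k) (ae_of_all _ hW_le)
  have hbound := measure_sum_ge_le_exp_sum_sub hW_ind hW_meas (inv_nonneg.2 hm.le) hint
    (fun k ↦ mgf_clamp_sub_le (hX2 k) hm (hmE k)) z
  have hevent : {ω | z ≤ (∑ k, Z k ω) - ∑ k, ∫ ω', X k ω'} = {ω | z ≤ (∑ k, W k) ω} := by
    ext ω
    simp [W, hZ, clamp, Finset.sum_sub_distrib]
  rw [hevent, ENNReal.le_ofReal_iff_toReal_le (measure_ne_top _ _) (exp_pos _).le]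
  simpa [measureReal_def, div_eq_inv_mul] using hbound

/-- one-sided concentration for sums of truncated random variables.
For independent integrable real random variables `X 1, …, X n` with finite variances,
`m > |E[X k]|` for all `k`, and `Z k = max (min (X k) m) (-m)`, for every `z > 0`,
`P[Σ Z k - Σ E[X k] ≥ z] ≤ exp(Σ Var[X k]/(m(m - |E[X k]|)) - z/m)`. -/
theorem truncation_concentration_one_sided {Ω : Type*} [MeasureSpace Ω]
    [IsProbabilityMeasure (ℙ : Measure Ω)] (n : ℕ) (X : Fin n → Ω → ℝ)
    (hXind : iIndepFun X ℙ)
    (hXint : ∀ k, Integrable (X k)) (hX2 : ∀ k, MemLp (X k) 2 ℙ)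
    (m : ℝ) (hm : 0 < m) (hmE : ∀ k, |∫ ω, X k ω| < m)
    (Z : Fin n → Ω → ℝ) (hZ : ∀ k ω, Z k ω = max (min (X k ω) m) (-m))
    (z : ℝ) (hz : 0 < z) :
    ℙ {ω | z ≤ (∑ k, Z k ω) - ∑ k, ∫ ω', X k ω'} ≤
      ENNReal.ofReal
        (exp ((∑ k, variance (X k) ℙ / (m * (m - |∫ ω, X k ω|))) - z / m)) :=
  truncation_concentration_one_sided_general n X hXind hX2 m hm hmE Z hZ z
end

section
/- Let X be a real-valued integrable random variable with finite variance on a probability space, let μ = E[X], let m > 0 satisfy m > |μ|, and let Z = max(min(X, m), −m) be the truncation of X to [−m, m]. Then E[exp((Z − μ)/m)] ≤ exp( Var[X] / (m(m − |μ|)) ). -/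
open MeasureTheory ProbabilityTheory Real

/-! Put `y = (Z - μ)/m` and `b = |μ|/m`. Since `Z ≤ m`, `y ≤ 1 + b` with `0 ≤ b < 1`, and on
that range `exp y ≤ 1 + y + y²/(1 - b)` (for `y ≤ 0` this is the second-order Taylor bound, for
`y > 0` the cubic remainder is absorbed using `(1 - b) e^(1+b) ≤ e < 3`). The right-hand side is
`1 + q(Z)/(m(m - |μ|))` with `q(t) = (t - μ)² + (m - |μ|)(t - μ)`, and clipping to `[-m, m]`
can only decrease `q` because `m ≥ |μ|`. Hence pointwise
`exp((Z - μ)/m) ≤ 1 + (X - μ)/m + (X - μ)²/(m(m - |μ|))`, and taking expectations gives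
`1 + Var X/(m(m - |μ|)) ≤ exp(Var X/(m(m - |μ|)))`. -/

namespace Real

theorem exp_le_one_add_add_sq_div_two_of_nonpos {y : ℝ} (hy : y ≤ 0) :
    exp y ≤ 1 + y + y ^ 2 / 2 := by
  have hanti : AntitoneOn (fun t : ℝ => 1 + t + t ^ 2 / 2 - exp t) (Set.Iic 0) := by
    refine antitoneOn_of_deriv_nonpos (convex_Iic 0) (by fun_prop) (by fun_prop) fun t _ => ?_
    have hderiv : HasDerivAt (fun t : ℝ => 1 + t + t ^ 2 / 2 - exp t) (1 + t - exp t) t :=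
      ((((hasDerivAt_id' t).const_add 1).add ((hasDerivAt_pow 2 t).div_const 2)).sub
        (hasDerivAt_exp t)).congr_deriv (by push_cast; ring)
    rw [hderiv.deriv]
    linarith [add_one_le_exp t]
  simpa using hanti hy (Set.mem_Iic.2 le_rfl) hy

theorem exp_le_one_add_add_sq_div_two_add_pow_three_mul_exp_div_six {y : ℝ} (hy : 0 ≤ y) :
    exp y ≤ 1 + y + y ^ 2 / 2 + y ^ 3 * exp y / 6 := by
  have hmono : MonotoneOn (fun t : ℝ => (1 + t + t ^ 2 / 2) * exp (-t) + t ^ 3 / 6)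
      (Set.Ici 0) := by
    refine monotoneOn_of_deriv_nonneg (convex_Ici 0) (by fun_prop) (by fun_prop) fun t ht₀ => ?_
    have ht : 0 ≤ t := (interior_subset ht₀ : t ∈ Set.Ici 0)
    have hderiv : HasDerivAt (fun t : ℝ => (1 + t + t ^ 2 / 2) * exp (-t) + t ^ 3 / 6)
        (t ^ 2 / 2 * (1 - exp (-t))) t :=
      (((((hasDerivAt_id' t).const_add 1).add ((hasDerivAt_pow 2 t).div_const 2)).mul
        (hasDerivAt_neg t).exp).add ((hasDerivAt_pow 3 t).div_const 6)).congr_deriv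
        (by simp only [Pi.add_apply]; push_cast; ring)
    rw [hderiv.deriv]
    have : exp (-t) ≤ 1 := exp_le_one_iff.2 (by linarith)
    have : 0 ≤ 1 - exp (-t) := by linarith
    positivity
  have h := hmono (Set.mem_Ici.2 le_rfl) (Set.mem_Ici.2 hy) hy
  simp only [neg_zero, exp_zero] at h
  calc exp y = exp y * 1 := (mul_one _).symm
    _ ≤ exp y * ((1 + y + y ^ 2 / 2) * exp (-y) + y ^ 3 / 6) := by gcongr; linarith
    _ = 1 + y + y ^ 2 / 2 + y ^ 3 * exp y / 6 := by rw [exp_neg]; field_simp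

theorem one_sub_mul_exp_one_add_le_exp_one (b : ℝ) : (1 - b) * exp (1 + b) ≤ exp 1 :=
  calc (1 - b) * exp (1 + b) ≤ exp (-b) * exp (1 + b) := by
        gcongr; linarith [add_one_le_exp (-b)]
    _ = exp 1 := by rw [← exp_add]; ring_nf

theorem exp_le_one_add_add_sq_div_one_sub {b y : ℝ} (hb₀ : -1 ≤ b) (hb₁ : b < 1)
    (hy : y ≤ 1 + b) : exp y ≤ 1 + y + y ^ 2 / (1 - b) := by
  have hb : 0 < 1 - b := by linarith
  rcases le_or_gt y 0 with hy₀ | hy₀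
  · have : y ^ 2 / 2 ≤ y ^ 2 / (1 - b) := by gcongr; linarith
    linarith [exp_le_one_add_add_sq_div_two_of_nonpos hy₀]
  · have hcubic := exp_le_one_add_add_sq_div_two_add_pow_three_mul_exp_div_six hy₀.le
    have hye : y * ((1 - b) * exp y) ≤ (1 + b) * 3 :=
      calc y * ((1 - b) * exp y) ≤ (1 + b) * ((1 - b) * exp (1 + b)) := by gcongr; linarith
        _ ≤ (1 + b) * 3 := by
          gcongr
          · linarith
          · exact (one_sub_mul_exp_one_add_le_exp_one b).trans exp_one_lt_three.le
    have : (exp y - 1 - y) * (1 - b) ≤ y ^ 2 := by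
      nlinarith [mul_le_mul_of_nonneg_left hcubic hb.le,
        mul_le_mul_of_nonneg_left hye (sq_nonneg y)]
    linarith [(le_div_iff₀ hb).2 this]

end Real

theorem sq_truncate_sub_add_le {x μ m : ℝ} (hμ : |μ| ≤ m) :
    (max (min x m) (-m) - μ) ^ 2 + (m - |μ|) * (max (min x m) (-m) - μ)
      ≤ (x - μ) ^ 2 + (m - |μ|) * (x - μ) := by
  have := neg_abs_le μ
  have := le_abs_self μ
  rcases le_total x (-m) with hx | hx
  · rw [min_eq_left (by linarith), max_eq_right hx]; nlinarith
  rcases le_total x m with hx' | hx'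
  · rw [min_eq_left hx', max_eq_left hx]
  · rw [min_eq_right hx', max_eq_left (by linarith)]; nlinarith

theorem exp_truncate_sub_div_le {x μ m : ℝ} (hμ : |μ| < m) :
    exp ((max (min x m) (-m) - μ) / m)
      ≤ 1 + (x - μ) / m + (x - μ) ^ 2 / (m * (m - |μ|)) := by
  set z := max (min x m) (-m)
  have hm : 0 < m := (abs_nonneg μ).trans_lt hμ
  have hgap : 0 < m - |μ| := by linarith
  have hz : z ≤ m := max_le (min_le_right _ _) (by linarith)
  have hy : (z - μ) / m ≤ 1 + |μ| / m := by
    rw [div_le_iff₀ hm, add_mul, div_mul_cancel₀ _ hm.ne']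
    linarith [neg_le_abs μ]
  have hexp := exp_le_one_add_add_sq_div_one_sub
    (by linarith [div_nonneg (abs_nonneg μ) hm.le]) ((div_lt_one hm).2 hμ) hy
  calc exp ((z - μ) / m) ≤ 1 + (z - μ) / m + ((z - μ) / m) ^ 2 / (1 - |μ| / m) := hexp
    _ = 1 + ((z - μ) ^ 2 + (m - |μ|) * (z - μ)) / (m * (m - |μ|)) := by
      field_simp; ring
    _ ≤ 1 + ((x - μ) ^ 2 + (m - |μ|) * (x - μ)) / (m * (m - |μ|)) := by
      gcongr 1 + ?_ / _; exact sq_truncate_sub_add_le hμ.le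
    _ = 1 + (x - μ) / m + (x - μ) ^ 2 / (m * (m - |μ|)) := by
      field_simp; ring

section

variable {Ω : Type*} [MeasurableSpace Ω] {P : Measure Ω} {X : Ω → ℝ}

theorem MeasureTheory.MemLp.integrable_const_add_div_add_sq_div [IsFiniteMeasure P]
    (hX : MemLp X 2 P) (c a b d : ℝ) :
    Integrable (fun ω => a + (X ω - c) / b + (X ω - c) ^ 2 / d) P :=
  ((integrable_const a).add (((hX.integrable one_le_two).sub (integrable_const c)).div_const b)).add
    ((hX.sub (memLp_const c)).integrable_sq.div_const d)

theorem ProbabilityTheory.integral_const_add_div_add_sq_div [IsProbabilityMeasure P]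
    (hX : MemLp X 2 P) (a b d : ℝ) :
    ∫ ω, (a + (X ω - P[X]) / b + (X ω - P[X]) ^ 2 / d) ∂P = a + variance X P / d := by
  have hXi := hX.integrable one_le_two
  have hlin : Integrable (fun ω => (X ω - P[X]) / b) P :=
    (hXi.sub (integrable_const _)).div_const b
  have hquad : Integrable (fun ω => (X ω - P[X]) ^ 2 / d) P :=
    (hX.sub (memLp_const _)).integrable_sq.div_const d
  rw [integral_add (f := fun ω => a + (X ω - P[X]) / b) ((integrable_const a).add hlin) hquad,
    integral_add (integrable_const a) hlin,
    integral_div, integral_div, integral_sub hXi (integrable_const _),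
    variance_eq_integral hX.aestronglyMeasurable.aemeasurable]
  simp

end

theorem truncation_mgf_bound_general {Ω : Type*} [MeasureSpace Ω]
    [IsProbabilityMeasure (ℙ : Measure Ω)]
    (X : Ω → ℝ) (hX2 : MemLp X 2 ℙ)
    (μ : ℝ) (hμ : μ = ∫ ω, X ω)
    (m : ℝ) (hmE : |μ| < m)
    (Z : Ω → ℝ) (hZ : ∀ ω, Z ω = max (min (X ω) m) (-m)) :
    (∫ ω, exp ((Z ω - μ) / m)) ≤ exp (variance X ℙ / (m * (m - |μ|))) := by
  obtain rfl : Z = _ := funext hZ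
  calc (∫ ω, exp ((max (min (X ω) m) (-m) - μ) / m))
      ≤ ∫ ω, (1 + (X ω - μ) / m + (X ω - μ) ^ 2 / (m * (m - |μ|))) :=
        integral_mono_of_nonneg (.of_forall fun _ => (exp_pos _).le)
          (hX2.integrable_const_add_div_add_sq_div _ _ _ _)
          (.of_forall fun _ => exp_truncate_sub_div_le hmE)
    _ = 1 + variance X ℙ / (m * (m - |μ|)) := by
        rw [hμ]; exact integral_const_add_div_add_sq_div hX2 _ _ _
    _ ≤ exp (variance X ℙ / (m * (m - |μ|))) := by
        linarith [add_one_le_exp (variance X ℙ / (m * (m - |μ|)))]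

/-- moment generating function bound for a truncated random variable.
For an integrable real random variable `X` with finite variance, `μ = E[X]`, `m > |μ|`,
and `Z = max (min X m) (-m)`, one has `E[exp((Z - μ)/m)] ≤ exp(Var[X]/(m(m - |μ|)))`. -/
theorem truncation_mgf_bound {Ω : Type*} [MeasureSpace Ω]
    [IsProbabilityMeasure (ℙ : Measure Ω)]
    (X : Ω → ℝ) (hXint : Integrable X) (hX2 : MemLp X 2 ℙ)
    (μ : ℝ) (hμ : μ = ∫ ω, X ω)
    (m : ℝ) (hm : 0 < m) (hmE : |μ| < m)
    (Z : Ω → ℝ) (hZ : ∀ ω, Z ω = max (min (X ω) m) (-m)) :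
    (∫ ω, exp ((Z ω - μ) / m)) ≤ exp (variance X ℙ / (m * (m - |μ|))) :=
  truncation_mgf_bound_general X hX2 μ hμ m hmE Z hZ
end

section
/- For every real number x, x · tanh(x/2) ≥ 2 − 2 / (cosh(x/2))². -/
open Real

lemma sinh_le_mul_cosh {u : ℝ} (hu : 0 ≤ u) : Real.sinh u ≤ u * Real.cosh u := by
  have key : MonotoneOn (fun u : ℝ => u * Real.cosh u - Real.sinh u) (Set.Ici 0) := by
    have hd : ∀ t : ℝ, HasDerivAt (fun u : ℝ => u * Real.cosh u - Real.sinh u)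
        (1 * Real.cosh t + t * Real.sinh t - Real.cosh t) t := fun t =>
      ((hasDerivAt_id t).mul (Real.hasDerivAt_cosh t)).sub (Real.hasDerivAt_sinh t)
    apply monotoneOn_of_deriv_nonneg (convex_Ici 0)
    · exact ((continuous_id.mul Real.continuous_cosh).sub Real.continuous_sinh).continuousOn
    · intro t _
      exact ((hd t).differentiableAt).differentiableWithinAt
    · intro t ht
      rw [(hd t).deriv]
      have ht' : 0 < t := by simpa using ht
      have := Real.sinh_nonneg_iff.mpr ht'.le
      nlinarith
  have h := key (Set.self_mem_Ici) (Set.mem_Ici.mpr hu) hu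
  simp only [Real.sinh_zero, Real.cosh_zero] at h
  linarith

lemma tanh_le_self {u : ℝ} (hu : 0 ≤ u) : Real.tanh u ≤ u := by
  rw [Real.tanh_eq_sinh_div_cosh, div_le_iff₀ (Real.cosh_pos u)]
  exact sinh_le_mul_cosh hu

/-- pointwise hyperbolic inequality. For every real `x`,
`x · tanh(x/2) ≥ 2 - 2/(cosh(x/2))² = 2 - 2 sech²(x/2)`. -/
theorem tanh_sech_inequality (x : ℝ) :
    2 - 2 / (cosh (x / 2)) ^ 2 ≤ x * tanh (x / 2) := by
  set u := x / 2 with hu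
  have hx : x = 2 * u := by rw [hu]; ring
  have hc : (0:ℝ) < Real.cosh u ^ 2 := pow_pos (Real.cosh_pos u) 2
  have hsq : Real.tanh u ^ 2 = 1 - 1 / Real.cosh u ^ 2 := by
    rw [Real.tanh_eq_sinh_div_cosh, div_pow]
    field_simp
    nlinarith [Real.cosh_sq_sub_sinh_sq u]
  have key : Real.tanh u ^ 2 ≤ u * Real.tanh u := by
    rcases le_or_gt 0 u with h | h
    · have ht0 : 0 ≤ Real.tanh u := by
        rw [Real.tanh_eq_sinh_div_cosh]
        exact div_nonneg (Real.sinh_nonneg_iff.mpr h) (Real.cosh_pos u).le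
      nlinarith [tanh_le_self h]
    · have h' : 0 ≤ -u := by linarith
      have ht : Real.tanh (-u) ≤ -u := tanh_le_self h'
      rw [Real.tanh_neg] at ht
      have ht0 : Real.tanh u ≤ 0 := by
        rw [Real.tanh_eq_sinh_div_cosh]
        exact div_nonpos_of_nonpos_of_nonneg (Real.sinh_nonpos_iff.mpr h.le) (Real.cosh_pos u).le
      nlinarith
  rw [hx]
  have h2 : 2 * u * Real.tanh u = 2 * (u * Real.tanh u) := by ring
  rw [h2]
  have h3 : 2 / Real.cosh u ^ 2 = 2 * (1 / Real.cosh u ^ 2) := by ring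
  rw [h3]
  linarith
end

section
/- Let f : ℝ → ℝ be a differentiable probability density on ℝ (f ≥ 0 and ∫_ℝ f(x) dx = 1) such that x ↦ x·f(x) is Lebesgue integrable, and set μ = ∫_ℝ x·f(x) dx. Assume that x ↦ (x − μ)·f'(x) is Lebesgue integrable on ℝ and that (x − μ)·f(x) → 0 as x → +∞ and as x → −∞. Then ∫_ℝ |(x − μ) · f'(x)| dx ≥ 1. -/
/-! Integrating `((x - μ) f(x))' = f(x) + (x - μ) f'(x)` over `ℝ`, the boundary terms vanish, so
`∫ (x - μ) f' = -∫ f = -1`; the bound is then `|∫ g| ≤ ∫ |g|`. -/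

open MeasureTheory Real Filter

theorem hasDerivAt_sub_mul {f : ℝ → ℝ} {c x : ℝ} (hf : DifferentiableAt ℝ f x) :
    HasDerivAt (fun y => (y - c) * f y) (f x + (x - c) * deriv f x) x := by
  simpa only [one_mul] using ((hasDerivAt_id' x).sub_const c).fun_mul hf.hasDerivAt

theorem integral_sub_mul_deriv {f : ℝ → ℝ} {c : ℝ} (hdiff : Differentiable ℝ f)
    (hf : Integrable f) (hint : Integrable fun x => (x - c) * deriv f x)
    (htop : Tendsto (fun x => (x - c) * f x) atTop (nhds 0))
    (hbot : Tendsto (fun x => (x - c) * f x) atBot (nhds 0)) :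
    ∫ x, (x - c) * deriv f x = -∫ x, f x := by
  have hsum : ∫ x, (f x + (x - c) * deriv f x) = 0 := by
    simpa using integral_of_hasDerivAt_of_tendsto (fun x => hasDerivAt_sub_mul (hdiff x))
      (hf.add hint) hbot htop
  rw [integral_add hf hint] at hsum
  linarith

theorem score_deviation_lower_bound_general (f : ℝ → ℝ)
    (hdiff : Differentiable ℝ f)
    (hdens : ∫ x, f x = 1)
    (μ : ℝ)
    (hint : Integrable (fun x => (x - μ) * deriv f x))
    (htop : Tendsto (fun x => (x - μ) * f x) atTop (nhds 0))
    (hbot : Tendsto (fun x => (x - μ) * f x) atBot (nhds 0)) :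
    1 ≤ ∫ x, |(x - μ) * deriv f x| := by
  have hf : Integrable f := .of_integral_ne_zero (by rw [hdens]; exact one_ne_zero)
  have hscore : ∫ x, (x - μ) * deriv f x = -1 := by
    rw [integral_sub_mul_deriv hdiff hf hint htop hbot, hdens]
  calc (1 : ℝ) = |∫ x, (x - μ) * deriv f x| := by rw [hscore, abs_neg, abs_one]
    _ ≤ ∫ x, |(x - μ) * deriv f x| := abs_integral_le_integral_abs

/-- lower bound for the score-times-deviation integral of a density.
If `f` is a differentiable probability density on `ℝ` with mean `μ`, `(x - μ) f'(x)` is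
integrable, and `(x - μ) f(x) → 0` as `x → ±∞`, then `∫ |(x - μ) f'(x)| dx ≥ 1`. -/
theorem score_deviation_lower_bound (f : ℝ → ℝ)
    (hnonneg : ∀ x, 0 ≤ f x) (hdiff : Differentiable ℝ f)
    (hdens : ∫ x, f x = 1)
    (hxf : Integrable (fun x => x * f x))
    (μ : ℝ) (hμ : μ = ∫ x, x * f x)
    (hint : Integrable (fun x => (x - μ) * deriv f x))
    (htop : Tendsto (fun x => (x - μ) * f x) atTop (nhds 0))
    (hbot : Tendsto (fun x => (x - μ) * f x) atBot (nhds 0)) :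
    1 ≤ ∫ x, |(x - μ) * deriv f x| :=
  score_deviation_lower_bound_general f hdiff hdens μ hint htop hbot
end

section
/- Let A and P be d×d real symmetric matrices with P² = P (so P is a symmetric projection), let A₁ = P A P, and suppose rank(A₁) = rank(A). Let B be any d×d real matrix satisfying the four Penrose equations for A₁: A₁ B A₁ = A₁, B A₁ B = B, (A₁ B)ᵀ = A₁ B, and (B A₁)ᵀ = B A₁. Then A = A B A. -/
open Matrix

/-- pseudo-inverse identity (Proposition `prop:elem`). For symmetric `A` and a
symmetric projection `P` with `A₁ = P A P` of the same rank as `A`, and `B` the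
Moore–Penrose pseudoinverse of `A₁` (characterized by the four Penrose equations),
one has `A = A B A`. -/
theorem pseudoinverse_identity {d : ℕ}
    (A P : Matrix (Fin d) (Fin d) ℝ) (hA : A.IsSymm) (hP : P.IsSymm) (hP2 : P * P = P)
    (A₁ : Matrix (Fin d) (Fin d) ℝ) (hA₁ : A₁ = P * A * P)
    (hrank : A₁.rank = A.rank)
    (B : Matrix (Fin d) (Fin d) ℝ)
    (hB1 : A₁ * B * A₁ = A₁) (hB2 : B * A₁ * B = B)
    (hB3 : (A₁ * B)ᵀ = A₁ * B) (hB4 : (B * A₁)ᵀ = B * A₁) :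
    A = A * B * A := by
  have hAs : Aᵀ = A := hA
  have hPs : Pᵀ = P := hP
  -- A₁ is symmetric
  have hA₁s : A₁ᵀ = A₁ := by
    rw [hA₁, transpose_mul, transpose_mul, hAs, hPs, mul_assoc]
  have hPA₁ : P * A₁ = A₁ := by
    rw [hA₁, ← mul_assoc, ← mul_assoc, hP2]
  have hA₁P : A₁ * P = A₁ := by
    rw [hA₁, mul_assoc, hP2]
  -- P * B = B and B * P = B
  have h1 : B * A₁ = A₁ * Bᵀ := by
    conv_lhs => rw [← hB4]
    rw [transpose_mul, hA₁s]
  have h2 : A₁ * B = Bᵀ * A₁ := by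
    conv_lhs => rw [← hB3]
    rw [transpose_mul, hA₁s]
  have hPB : P * B = B := by
    have hB' : B = A₁ * (Bᵀ * B) := by
      rw [← mul_assoc, ← h1, hB2]
    rw [hB', ← mul_assoc, hPA₁]
  have hBP : B * P = B := by
    have hB' : B = (B * Bᵀ) * A₁ := by
      conv_rhs => rw [mul_assoc, ← h2, ← mul_assoc, hB2]
    rw [hB', mul_assoc, hA₁P]
  -- rank(A*P) = rank(A)
  have hrAP : (A * P).rank = A.rank := by
    have h1' : A₁.rank ≤ (A * P).rank := by
      rw [hA₁, mul_assoc]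
      exact Matrix.rank_mul_le_right _ _
    have h2' : (A * P).rank ≤ A.rank := Matrix.rank_mul_le_left _ _
    omega
  -- range equality of mulVecLin
  have hsub : LinearMap.range (A * P).mulVecLin ≤ LinearMap.range A.mulVecLin := by
    rw [Matrix.mulVecLin_mul]
    exact LinearMap.range_comp_le_range _ _
  have hrange : LinearMap.range (A * P).mulVecLin = LinearMap.range A.mulVecLin := by
    apply Submodule.eq_of_le_of_finrank_eq hsub
    rw [← Matrix.rank, ← Matrix.rank, hrAP]
  -- find C with A = A * P * C
  have hcol : ∀ j : Fin d, ∃ v : Fin d → ℝ, (A * P) *ᵥ v = Aᵀ j := by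
    intro j
    have : Aᵀ j ∈ LinearMap.range (A * P).mulVecLin := by
      rw [hrange]
      exact ⟨Pi.single j 1, Matrix.mulVec_single_one A j⟩
    obtain ⟨v, hv⟩ := this
    exact ⟨v, hv⟩
  choose c hc using hcol
  set C : Matrix (Fin d) (Fin d) ℝ := Matrix.of (fun i j => c j i) with hC
  have hAPC : A * P * C = A := by
    ext i j
    have := congrFun (hc j) i
    simpa [Matrix.mul_apply, Matrix.mulVec, dotProduct, hC, Matrix.transpose_apply] using this
  have hCPA : Cᵀ * P * A = A := by
    have := congrArg Matrix.transpose hAPC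
    rw [transpose_mul, transpose_mul, hAs, hPs] at this
    rw [← mul_assoc] at this
    exact this
  -- final computation
  have hkey : P * A * B * (A * P) = A₁ := by
    rw [← hPB, ← hBP]
    have : P * A * (P * (B * P)) * (A * P) = P * A * P * B * (P * A * P) := by
      simp only [mul_assoc]
    rw [this, ← hA₁, hB1]
  have hfin : A * B * A = A := by
    calc A * B * A = (Cᵀ * P * A) * B * (A * P * C) := by rw [hCPA, hAPC]
      _ = Cᵀ * (P * A * B * (A * P)) * C := by simp only [mul_assoc]
      _ = Cᵀ * A₁ * C := by rw [hkey]
      _ = Cᵀ * P * (A * P * C) := by rw [hA₁]; simp only [mul_assoc]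
      _ = Cᵀ * P * A := by rw [hAPC]
      _ = A := hCPA
  exact hfin.symm
end

section
/- Let d be a positive integer, let λ₁, …, λ_d be positive real numbers, let T > 0, and let R₁, …, R_d be nonnegative real numbers with Σₖ Rₖ ≤ T. Set S = Σⱼ λⱼ^{−1/2} and let x₁, …, x_d be real numbers with xₖ² = λₖ^{−3/2} · S / (2T) for every k. Then (1/2) · Σₖ (1 − λₖ² xₖ² Rₖ) · λₖ xₖ² ≥ S² / (8T). -/
open Finset

/-- lower bound on the simple regret of the hard instances via energy
allocation. With positive eigenvalues `λₖ`, a sample budget `T > 0`, a nonnegative energy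
allocation `Rₖ` with `Σ Rₖ ≤ T`, `S = Σ λⱼ^{-1/2}`, and hard-instance coordinates
satisfying `xₖ² = λₖ^{-3/2} S/(2T)`, one has
`(1/2) Σ (1 - λₖ² xₖ² Rₖ) λₖ xₖ² ≥ S²/(8T)`. -/
theorem hard_instance_regret_bound (d : ℕ) (hd : 0 < d)
    (lam : Fin d → ℝ) (hlam : ∀ k, 0 < lam k)
    (T : ℝ) (hT : 0 < T)
    (R : Fin d → ℝ) (hR : ∀ k, 0 ≤ R k) (hRT : ∑ k, R k ≤ T)
    (S : ℝ) (hS : S = ∑ j, lam j ^ (-(1 : ℝ) / 2))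
    (x : Fin d → ℝ) (hx : ∀ k, x k ^ 2 = lam k ^ (-(3 : ℝ) / 2) * S / (2 * T)) :
    S ^ 2 / (8 * T) ≤ (1 / 2) * ∑ k, (1 - lam k ^ 2 * x k ^ 2 * R k) * (lam k * x k ^ 2) := by
  have key : ∀ k, (1 - lam k ^ 2 * x k ^ 2 * R k) * (lam k * x k ^ 2)
      = S / (2 * T) * lam k ^ (-(1 : ℝ) / 2) - S ^ 2 / (4 * T ^ 2) * R k := by
    intro k
    have h1 : lam k * x k ^ 2 = lam k ^ (-(1 : ℝ) / 2) * S / (2 * T) := by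
      rw [hx k, show lam k * (lam k ^ (-(3:ℝ)/2) * S / (2*T))
          = (lam k ^ (1:ℝ) * lam k ^ (-(3:ℝ)/2)) * S / (2*T) by
        rw [Real.rpow_one]; ring]
      rw [← Real.rpow_add (hlam k)]
      norm_num
    have h2 : lam k ^ 2 * x k ^ 2 = lam k ^ ((1 : ℝ) / 2) * S / (2 * T) := by
      rw [hx k, show lam k ^ 2 * (lam k ^ (-(3:ℝ)/2) * S / (2*T))
          = (lam k ^ (2:ℝ) * lam k ^ (-(3:ℝ)/2)) * S / (2*T) by
        rw [show lam k ^ (2:ℝ) = lam k ^ (2:ℕ) by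
          rw [← Real.rpow_natCast (lam k) 2]; norm_num]
        ring]
      rw [← Real.rpow_add (hlam k)]
      norm_num
    have hmul : lam k ^ ((1:ℝ)/2) * lam k ^ (-(1:ℝ)/2) = 1 := by
      rw [← Real.rpow_add (hlam k)]; norm_num
    rw [h1, h2]
    linear_combination (-(S^2 * R k) / (4*T^2)) * hmul
  have hsum : ∑ k, (1 - lam k ^ 2 * x k ^ 2 * R k) * (lam k * x k ^ 2)
      = S / (2*T) * S - S^2 / (4*T^2) * ∑ k, R k := by
    rw [Finset.sum_congr rfl fun k _ => key k, Finset.sum_sub_distrib,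
      ← Finset.mul_sum, ← Finset.mul_sum, ← hS]
  rw [hsum]
  have hS2 : 0 ≤ S ^ 2 / (4 * T ^ 2) := by positivity
  have h1 : S ^ 2 / (4 * T ^ 2) * ∑ k, R k ≤ S ^ 2 / (4 * T ^ 2) * T :=
    mul_le_mul_of_nonneg_left hRT hS2
  have e1 : S ^ 2 / (4 * T ^ 2) * T = S ^ 2 / (4 * T) := by
    field_simp
  have e3 : 1 / 2 * (S / (2 * T) * S - S ^ 2 / (4 * T)) = S ^ 2 / (8 * T) := by ring
  linarith
end
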